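/- (Spectrum of the b-step RSB (Parisi) correlation matrix, Appendix D of the paper) Let b ≥ 1 and let ξ₁, …, ξ_b, m be positive integers with ξ₁ ∣ ξ₂ ∣ ⋯ ∣ ξ_b ∣ m, and let c, q and p₁, …, p_b be real numbers. The matrix Q = c·I_m + Σ_{κ=1}^b p_κ·(I_{m/ξ_κ} ⊗ J_{ξ_κ}) + q·J_m has characteristic polynomial det(X·I_m − Q) = (X − (c + Σ_{κ=1}^b ξ_κ·p_κ + m·q)) · (X − (c + Σ_{κ=1}^b ξ_κ·p_κ))^{m/ξ_b − 1} · Π_{κ=1}^{b−1} (X − (c + Σ_{ς=1}^{κ} ξ_ς·p_ς))^{m/ξ_κ − m/ξ_{κ+1}} · (X − c)^{m − m/ξ₁}. -/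

import Mathlib

/-!
Every level of the nested block structure is a union of `ξ₁ × ξ₁` blocks, so
`Q - c I = P M Pᵀ`, where `P` is the `m × (m / ξ₁)` block-indicator matrix and `M` is a
correlation matrix of the same shape on `m / ξ₁` points with one level fewer (the finest level
becomes the identity). Since `Pᵀ P = ξ₁ I`, Sylvester's identity `χ(A B) X^n = χ(B A) X^m`
gives `χ_Q = (X - c)^(m - m / ξ₁) χ_(c I + ξ₁ M)`, and induction on the number of levels
finishes the proof; the base case `c I + q J` is the same computation with a `1 × 1` matrix `M`.
-/

open Finset Matrix Polynomial

variable {R : Type*} [CommRing R]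

theorem Matrix.charpoly_smul_one_add {κ : Type*} [Fintype κ] [DecidableEq κ] (c : R)
    (A : Matrix κ κ R) : (c • 1 + A).charpoly = A.charpoly.comp (X - C c) := by
  rw [sub_eq_add_neg, ← C_neg, ← charpoly_sub_scalar, scalar_apply, ← smul_one_eq_diagonal,
    neg_smul, sub_neg_eq_add, add_comm]

theorem Matrix.submatrix_eq_one_submatrix_mul_mul {ι κ : Type*} [Fintype κ] [DecidableEq κ]
    (f : ι → κ) (M : Matrix κ κ R) :
    M.submatrix f f =
      (1 : Matrix κ κ R).submatrix f id * M * (1 : Matrix κ κ R).submatrix id f := by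
  ext i j
  simp [mul_apply, one_apply]

theorem Matrix.one_submatrix_mul_one_submatrix_of_card_fiber {ι κ : Type*} [Fintype ι]
    [DecidableEq κ] (f : ι → κ) {ξ : ℕ} (hf : ∀ a, #{i | f i = a} = ξ) :
    (1 : Matrix κ κ R).submatrix id f * (1 : Matrix κ κ R).submatrix f id = (ξ : R) • 1 := by
  ext a b
  simp only [mul_apply, submatrix_apply, id, one_apply, ← ite_and, sum_boole, smul_apply,
    smul_eq_mul, mul_ite, mul_one, mul_zero]
  split_ifs with hab
  · simp only [hab, eq_comm (a := b), and_self, hf]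
  · rw [filter_false_of_mem fun i _ h => hab (h.2.trans h.1), card_empty, Nat.cast_zero]

theorem Matrix.charpoly_submatrix_of_card_fiber {ι κ : Type*} [Fintype ι] [DecidableEq ι]
    [Fintype κ] [DecidableEq κ] (f : ι → κ) {ξ : ℕ} (hf : ∀ a, #{i | f i = a} = ξ)
    (hle : Fintype.card κ ≤ Fintype.card ι) (M : Matrix κ κ R) :
    (M.submatrix f f).charpoly =
      X ^ (Fintype.card ι - Fintype.card κ) * ((ξ : R) • M).charpoly := by
  rw [submatrix_eq_one_submatrix_mul_mul, charpoly_mul_comm_of_le _ _ hle, ← Matrix.mul_assoc,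
    one_submatrix_mul_one_submatrix_of_card_fiber f hf, Matrix.smul_mul, Matrix.one_mul]

theorem Matrix.charpoly_smul_one_add_submatrix_of_card_fiber {ι κ : Type*} [Fintype ι]
    [DecidableEq ι] [Fintype κ] [DecidableEq κ] (f : ι → κ) {ξ : ℕ}
    (hf : ∀ a, #{i | f i = a} = ξ) (hle : Fintype.card κ ≤ Fintype.card ι) (c : R)
    (M : Matrix κ κ R) :
    (c • 1 + M.submatrix f f).charpoly =
      (X - C c) ^ (Fintype.card ι - Fintype.card κ) * (c • 1 + (ξ : R) • M).charpoly := by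
  rw [charpoly_smul_one_add, charpoly_smul_one_add, charpoly_submatrix_of_card_fiber f hf hle,
    mul_comp, pow_comp, X_comp]

def blockIndex {m ξ : ℕ} (h : ξ ∣ m) (i : Fin m) : Fin (m / ξ) :=
  ⟨i / ξ, Nat.div_lt_div_of_lt_of_dvd h i.2⟩

theorem card_blockIndex_fiber {m ξ : ℕ} (h : ξ ∣ m) (a : Fin (m / ξ)) :
    #{i | blockIndex h i = a} = ξ := by
  obtain ⟨n, rfl⟩ := h
  have hξ : 0 < ξ := Nat.pos_of_ne_zero fun h0 => by simpa [h0] using a.pos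
  have ha : (a : ℕ) < n := by simpa [hξ] using a.2
  have hfiber : ({i | blockIndex ⟨n, rfl⟩ i = a} : Finset (Fin (ξ * n))).map Fin.valEmbedding =
      Ico (a * ξ) (a * ξ + ξ) := by
    ext k
    simp only [mem_map, mem_filter, mem_univ, true_and, blockIndex, Fin.ext_iff,
      Fin.valEmbedding_apply, mem_Ico]
    constructor
    · rintro ⟨i, hi, rfl⟩
      rw [Nat.div_eq_iff hξ] at hi
      omega
    · intro hk
      exact ⟨⟨k, by nlinarith⟩, by dsimp only; rw [Nat.div_eq_iff hξ]; omega, rfl⟩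
  rw [← card_map, hfiber, Nat.card_Ico, Nat.add_sub_cancel_left]

variable (R) in
/-- The matrix `I_{m/ξ} ⊗ J_ξ`. -/
def blockOnes (m ξ : ℕ) : Matrix (Fin m) (Fin m) R :=
  of fun i j => if (i : ℕ) / ξ = (j : ℕ) / ξ then 1 else 0

theorem blockOnes_one (m : ℕ) : blockOnes R m 1 = 1 := by
  ext i j
  simp [blockOnes, one_apply, Fin.ext_iff]

theorem blockOnes_submatrix_blockIndex {m ξ η : ℕ} (hξη : ξ ∣ η) (hξm : ξ ∣ m) :
    (blockOnes R (m / ξ) (η / ξ)).submatrix (blockIndex hξm) (blockIndex hξm) =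
      blockOnes R m η := by
  ext i j
  simp [blockOnes, blockIndex, Nat.div_div_eq_div_mul, Nat.mul_div_cancel' hξη]

def parisiMatrix (m L : ℕ) (ζ : ℕ → ℕ) (c : R) (a : ℕ → R) (q : R) :
    Matrix (Fin m) (Fin m) R :=
  c • 1 + ∑ κ ∈ range L, a κ • blockOnes R m (ζ κ) + q • of fun _ _ => 1

theorem parisiMatrix_zero (m : ℕ) (ζ : ℕ → ℕ) (c : R) (a : ℕ → R) (q : R) :
    parisiMatrix m 0 ζ c a q =
      c • 1 + (q • 1 : Matrix Unit Unit R).submatrix (fun _ => ()) (fun _ => ()) := by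
  ext i j
  simp [parisiMatrix]

theorem parisiMatrix_eq_smul_one_add_submatrix {m L ξ : ℕ} {ζ : ℕ → ℕ}
    (hζ : ∀ κ < L, ξ ∣ ζ κ) (hm : ξ ∣ m) (c : R) (a : ℕ → R) (q : R) :
    parisiMatrix m L ζ c a q =
      c • 1 +
        (parisiMatrix (m / ξ) L (ζ · / ξ) 0 a q).submatrix (blockIndex hm) (blockIndex hm) := by
  have hblock : ∀ κ ∈ range L, a κ • blockOnes R m (ζ κ) =
      (a κ • blockOnes R (m / ξ) (ζ κ / ξ)).submatrix (blockIndex hm) (blockIndex hm) :=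
    fun κ hκ => by rw [← blockOnes_submatrix_blockIndex (hζ κ (mem_range.1 hκ)) hm]; rfl
  ext i j
  simp [parisiMatrix, sum_congr rfl hblock, Matrix.sum_apply, add_assoc]

theorem smul_one_add_smul_parisiMatrix (m L : ℕ) (ζ : ℕ → ℕ) (c r c₀ : R) (a : ℕ → R)
    (q : R) :
    c • 1 + r • parisiMatrix m L ζ c₀ a q = parisiMatrix m L ζ (c + r * c₀) (r • a) (r * q) := by
  simp only [parisiMatrix, smul_add, smul_sum, smul_smul, add_smul, Pi.smul_apply, smul_eq_mul]
  abel

theorem parisiMatrix_succ_of_eq_one {m L : ℕ} {ζ : ℕ → ℕ} (hζ : ζ 0 = 1) (c : R) (a : ℕ → R)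
    (q : R) :
    parisiMatrix m (L + 1) ζ c a q =
      parisiMatrix m L (fun κ => ζ (κ + 1)) (c + a 0) (fun κ => a (κ + 1)) q := by
  simp only [parisiMatrix, sum_range_succ', hζ, blockOnes_one, add_smul]
  abel

theorem apply_zero_dvd_of_forall_dvd_succ {ζ : ℕ → ℕ} {L : ℕ}
    (hchain : ∀ κ < L, ζ κ ∣ ζ (κ + 1)) {κ : ℕ} (hκ : κ ≤ L) : ζ 0 ∣ ζ κ := by
  induction κ with
  | zero => rfl
  | succ k ih => exact (ih (by omega)).trans (hchain k (by omega))

theorem charpoly_parisiMatrix_succ {m L : ℕ} {ζ : ℕ → ℕ} (hζ : ∀ κ < L + 1, ζ 0 ∣ ζ κ)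
    (hm : ζ 0 ∣ m) (h0 : 0 < ζ 0) (c : R) (a : ℕ → R) (q : R) :
    (parisiMatrix m (L + 1) ζ c a q).charpoly =
      (X - C c) ^ (m - m / ζ 0) *
        (parisiMatrix (m / ζ 0) L (fun κ => ζ (κ + 1) / ζ 0) (c + ζ 0 * a 0)
          (fun κ => ζ 0 * a (κ + 1)) (ζ 0 * q)).charpoly := by
  rw [parisiMatrix_eq_smul_one_add_submatrix hζ hm,
    charpoly_smul_one_add_submatrix_of_card_fiber _ (card_blockIndex_fiber hm)
      (by simpa using Nat.div_le_self m _),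
    smul_one_add_smul_parisiMatrix,
    parisiMatrix_succ_of_eq_one (ζ := (ζ · / ζ 0)) (Nat.div_self h0),
    Fintype.card_fin, Fintype.card_fin, mul_zero, add_zero]
  rfl

theorem charpoly_parisiMatrix {L m : ℕ} (hm : 0 < m) {ζ : ℕ → ℕ}
    (hchain : ∀ κ < L, ζ κ ∣ ζ (κ + 1)) (htop : ζ L = m) (c : R) (a : ℕ → R) (q : R) :
    (parisiMatrix m L ζ c a q).charpoly =
      (X - C (c + (∑ κ ∈ range L, (ζ κ : R) * a κ) + m * q)) *
        (∏ κ ∈ range L,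
          (X - C (c + ∑ ς ∈ range (κ + 1), (ζ ς : R) * a ς)) ^ (m / ζ κ - m / ζ (κ + 1))) *
        (X - C c) ^ (m - m / ζ 0) := by
  induction L generalizing m ζ c a q with
  | zero =>
    have hfiber : ∀ u : Unit, #{i : Fin m | () = u} = m := fun _ => by simp
    rw [parisiMatrix_zero, charpoly_smul_one_add_submatrix_of_card_fiber _ hfiber
      (by rw [Fintype.card_unit, Fintype.card_fin]; exact hm),
      smul_smul, ← add_smul, smul_one_eq_diagonal, charpoly_diagonal]
    simp only [Fintype.card_fin, Fintype.card_unique, univ_unique, prod_singleton, range_zero,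
      sum_empty, prod_empty, add_zero, mul_one, htop, Nat.div_self hm]
    ring
  | succ L ih =>
    have hζ : ∀ κ ≤ L + 1, ζ 0 ∣ ζ κ := fun κ => apply_zero_dvd_of_forall_dvd_succ hchain
    have h0m : ζ 0 ∣ m := htop ▸ hζ (L + 1) le_rfl
    have h0 : 0 < ζ 0 := Nat.pos_of_dvd_of_pos h0m hm
    rw [charpoly_parisiMatrix_succ (fun κ hκ => hζ κ hκ.le) h0m h0,
      ih (Nat.div_pos (Nat.le_of_dvd hm h0m) h0)
        (fun κ _ => Nat.div_dvd_div (hζ _ (by omega)) (hchain _ (by omega))) (by rw [htop])]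
    have heig : ∀ k ≤ L, c + ζ 0 * a 0 +
        ∑ κ ∈ range k, ((ζ (κ + 1) / ζ 0 : ℕ) : R) * (ζ 0 * a (κ + 1)) =
          c + ∑ κ ∈ range (k + 1), (ζ κ : R) * a κ := by
      intro k hk
      have hterm : ∀ κ ∈ range k,
          ((ζ (κ + 1) / ζ 0 : ℕ) : R) * (ζ 0 * a (κ + 1)) = ζ (κ + 1) * a (κ + 1) := by
        intro κ hκ
        have := mem_range.1 hκ
        rw [← mul_assoc, ← Nat.cast_mul, Nat.div_mul_cancel (hζ _ (by omega))]
      rw [sum_congr rfl hterm, sum_range_succ']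
      ring
    have hmult : ∀ κ ≤ L + 1, m / ζ 0 / (ζ κ / ζ 0) = m / ζ κ := fun κ hκ => by
      rw [Nat.div_div_eq_div_mul, Nat.mul_div_cancel' (hζ κ hκ)]
    have htopq : ((m / ζ 0 : ℕ) : R) * (ζ 0 * q) = m * q := by
      rw [← mul_assoc, ← Nat.cast_mul, Nat.div_mul_cancel h0m]
    rw [heig L le_rfl, htopq, hmult 1 (by omega), prod_range_succ' _ L,
      prod_congr rfl fun κ hκ => by
        have := mem_range.1 hκ
        rw [heig (κ + 1) (by omega), hmult (κ + 1) (by omega), hmult (κ + 1 + 1) (by omega)]]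
    simp only [map_add, map_sum, map_mul, map_natCast, zero_add, range_one, sum_singleton]
    ring

theorem parisi_correlation_matrix_charpoly_general (b m : ℕ) (hb : 1 ≤ b) (hm : 1 ≤ m)
    (ξ : ℕ → ℕ)
    (hchain : ∀ κ, κ + 1 < b → ξ κ ∣ ξ (κ + 1)) (hlast : ξ (b - 1) ∣ m)
    (p : ℕ → ℝ) (c q : ℝ) :
    (c • (1 : Matrix (Fin m) (Fin m) ℝ) +
        (∑ κ ∈ Finset.range b, p κ •
          (Matrix.of fun i j : Fin m =>
            if (i : ℕ) / ξ κ = (j : ℕ) / ξ κ then (1 : ℝ) else 0)) +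
        q • Matrix.of (fun _ _ => (1 : ℝ))).charpoly =
      (X - C (c + (∑ κ ∈ Finset.range b, (ξ κ : ℝ) * p κ) + m * q)) *
        (X - C (c + ∑ κ ∈ Finset.range b, (ξ κ : ℝ) * p κ)) ^ (m / ξ (b - 1) - 1) *
        (∏ κ ∈ Finset.range (b - 1),
          (X - C (c + ∑ ς ∈ Finset.range (κ + 1), (ξ ς : ℝ) * p ς)) ^
            (m / ξ κ - m / ξ (κ + 1))) *
        (X - C c) ^ (m - m / ξ 0) := by
  obtain ⟨b, rfl⟩ : ∃ b', b = b' + 1 := ⟨b - 1, by omega⟩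
  set ζ := Function.update ξ (b + 1) m
  have hζ : ∀ κ < b + 1, ζ κ = ξ κ := fun κ hκ => Function.update_of_ne hκ.ne _ _
  have hζtop : ζ (b + 1) = m := Function.update_self _ _ _
  have hsum : ∀ k ≤ b + 1, ∑ κ ∈ range k, (ζ κ : ℝ) * p κ = ∑ κ ∈ range k, (ξ κ : ℝ) * p κ :=
    fun k hk => sum_congr rfl fun κ hκ => by rw [hζ κ ((mem_range.1 hκ).trans_le hk)]
  have hmatrix : ∑ κ ∈ range (b + 1), p κ • (of fun i j : Fin m =>
      if (i : ℕ) / ξ κ = (j : ℕ) / ξ κ then (1 : ℝ) else 0) =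
      ∑ κ ∈ range (b + 1), p κ • blockOnes ℝ m (ζ κ) :=
    sum_congr rfl fun κ hκ => by rw [hζ κ (mem_range.1 hκ), blockOnes]
  have hchain' : ∀ κ < b + 1, ζ κ ∣ ζ (κ + 1) := by
    intro κ hκ
    rcases Nat.lt_succ_iff_lt_or_eq.1 hκ with hκ | rfl
    · rw [hζ κ (by omega), hζ (κ + 1) (by omega)]; exact hchain κ (by omega)
    · rw [hζ κ (by omega), hζtop]; exact hlast
  rw [hmatrix, ← parisiMatrix, charpoly_parisiMatrix hm hchain' hζtop, prod_range_succ,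
    hsum _ le_rfl, prod_congr rfl fun κ hκ => by
      have := mem_range.1 hκ
      rw [hsum (κ + 1) (by omega), hζ κ (by omega), hζ (κ + 1) (by omega)],
    hζ 0 (by omega), hζ b (by omega), hζtop, Nat.div_self hm, Nat.add_sub_cancel]
  ring

/-- Spectrum of the b-step RSB (Parisi) correlation matrix.  The nested block
matrix I_{m/ξ} ⊗ J_ξ (for ξ ∣ m) is represented on `Fin m` as the matrix whose
(i,j) entry is 1 when ⌊i/ξ⌋ = ⌊j/ξ⌋ and 0 otherwise.  Blocks are indexed by
κ = 0,…,b−1 (the paper's κ = 1,…,b). -/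
theorem parisi_correlation_matrix_charpoly (b m : ℕ) (hb : 1 ≤ b) (hm : 1 ≤ m)
    (ξ : ℕ → ℕ) (hξpos : ∀ κ, κ < b → 1 ≤ ξ κ)
    (hchain : ∀ κ, κ + 1 < b → ξ κ ∣ ξ (κ + 1)) (hlast : ξ (b - 1) ∣ m)
    (p : ℕ → ℝ) (c q : ℝ) :
    (c • (1 : Matrix (Fin m) (Fin m) ℝ) +
        (∑ κ ∈ Finset.range b, p κ •
          (Matrix.of fun i j : Fin m =>
            if (i : ℕ) / ξ κ = (j : ℕ) / ξ κ then (1 : ℝ) else 0)) +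
        q • Matrix.of (fun _ _ => (1 : ℝ))).charpoly =
      (X - C (c + (∑ κ ∈ Finset.range b, (ξ κ : ℝ) * p κ) + m * q)) *
        (X - C (c + ∑ κ ∈ Finset.range b, (ξ κ : ℝ) * p κ)) ^ (m / ξ (b - 1) - 1) *
        (∏ κ ∈ Finset.range (b - 1),
          (X - C (c + ∑ ς ∈ Finset.range (κ + 1), (ξ ς : ℝ) * p ς)) ^
            (m / ξ κ - m / ξ (κ + 1))) *
        (X - C c) ^ (m - m / ξ 0) :=
  parisi_correlation_matrix_charpoly_general b m hb hm ξ hchain hlast p c q
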